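/- Let w ∈ ℝ³ with |w| = 4/3 and u(x) = 3(1+|x|²)^{-2}((1-|x|²)w + 2(w·x)x + 2 w×x). Then ∫_{ℝ³} |u(x)|³ dx = 16π². -/

import Mathlib

noncomputable section
open MeasureTheory Real
open scoped BigOperators

/-- `ℝ³` with the Euclidean norm. -/
abbrev E3 : Type := EuclideanSpace ℝ (Fin 3)

/-- Build a vector of `E3` from components. -/
def toE3 (f : Fin 3 → ℝ) : E3 := (WithLp.equiv 2 (Fin 3 → ℝ)).symm f

/-- Euclidean inner product on `ℝ³`. -/
def ip (a b : E3) : ℝ := @inner ℝ _ _ a b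

/-- `i`-th partial derivative of a scalar function on `ℝ³`. -/
def pd (i : Fin 3) (f : E3 → ℝ) (x : E3) : ℝ :=
  fderiv ℝ f x (EuclideanSpace.single i 1)

/-- The curl `∇×v` of a vector field on `ℝ³`. -/
def curl (v : E3 → E3) (x : E3) : E3 :=
  toE3 ![pd 1 (fun y => v y 2) x - pd 2 (fun y => v y 1) x,
        pd 2 (fun y => v y 0) x - pd 0 (fun y => v y 2) x,
        pd 0 (fun y => v y 1) x - pd 1 (fun y => v y 0) x]

/-- The divergence of a vector field on `ℝ³`. -/
def div3 (v : E3 → E3) (x : E3) : ℝ :=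
  pd 0 (fun y => v y 0) x + pd 1 (fun y => v y 1) x + pd 2 (fun y => v y 2) x

/-- The cross product on `ℝ³`. -/
def cross3 (a b : E3) : E3 :=
  toE3 (crossProduct (WithLp.equiv 2 (Fin 3 → ℝ) a) (WithLp.equiv 2 (Fin 3 → ℝ) b))

/-- Squared Frobenius norm `|∇v|²` of the Jacobian of a vector field. -/
def jacNormSq (v : E3 → E3) (x : E3) : ℝ :=
  ∑ i : Fin 3, ∑ j : Fin 3, (pd i (fun y => v y j) x) ^ 2

/-- The Loss–Yau field `u(x) = 3(1+|x|²)⁻²((1-|x|²)w + 2(w·x)x + 2 w×x)`. -/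
def uLY (w : E3) (x : E3) : E3 :=
  (3 * ((1 + ‖x‖ ^ 2) ^ 2)⁻¹) •
    ((1 - ‖x‖ ^ 2) • w + (2 * ip w x) • x + (2 : ℝ) • cross3 w x)

/-!
Since `w × x` is orthogonal to `w` and `x` with `|w × x|² = |w|²|x|² - (w·x)²`, the bracket
`(1 - |x|²) w + 2 (w·x) x + 2 w × x` has norm `(1 + |x|²)|w|`, so `|u(x)| = 3|w| / (1 + |x|²)`.
In polar coordinates the integral becomes `64 · 4π ∫₀^∞ r² (1 + r²)⁻³ dr = 64 · 4π · π/16`,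
the radial integral having the elementary antiderivative
`(arctan r + r / (1 + r²)) / 8 - r / (4 (1 + r²)²)`.
-/

open Filter Set Topology

lemma E3.norm_sq_eq (x : E3) : ‖x‖ ^ 2 = x 0 ^ 2 + x 1 ^ 2 + x 2 ^ 2 := by
  simp [EuclideanSpace.norm_sq_eq, Fin.sum_univ_three]

lemma ip_eq (a b : E3) : ip a b = a 0 * b 0 + a 1 * b 1 + a 2 * b 2 := by
  simp [ip, PiLp.inner_apply, Fin.sum_univ_three, mul_comm]

lemma cross3_apply_zero (a b : E3) : cross3 a b 0 = a 1 * b 2 - a 2 * b 1 := by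
  simp [cross3, cross_apply, toE3]

lemma cross3_apply_one (a b : E3) : cross3 a b 1 = a 2 * b 0 - a 0 * b 2 := by
  simp [cross3, cross_apply, toE3]

lemma cross3_apply_two (a b : E3) : cross3 a b 2 = a 0 * b 1 - a 1 * b 0 := by
  simp [cross3, cross_apply, toE3]

lemma norm_sq_uLY_bracket (w x : E3) :
    ‖(1 - ‖x‖ ^ 2) • w + (2 * ip w x) • x + (2 : ℝ) • cross3 w x‖ ^ 2 =
      ((1 + ‖x‖ ^ 2) * ‖w‖) ^ 2 := by
  rw [mul_pow, E3.norm_sq_eq, E3.norm_sq_eq w, E3.norm_sq_eq x]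
  simp only [PiLp.add_apply, PiLp.smul_apply, smul_eq_mul, ip_eq, cross3_apply_zero,
    cross3_apply_one, cross3_apply_two]
  ring

lemma norm_uLY (w x : E3) : ‖uLY w x‖ = 3 * ‖w‖ / (1 + ‖x‖ ^ 2) := by
  have hx : 0 < 1 + ‖x‖ ^ 2 := by positivity
  have hbracket := (sq_eq_sq₀ (norm_nonneg _) (by positivity)).1 (norm_sq_uLY_bracket w x)
  rw [uLY, norm_smul, hbracket, Real.norm_of_nonneg (by positivity)]
  field_simp

lemma tendsto_div_one_add_sq_pow_atTop {n : ℕ} (hn : n ≠ 0) :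
    Tendsto (fun r : ℝ => r / (1 + r ^ 2) ^ n) atTop (𝓝 0) := by
  refine tendsto_of_tendsto_of_tendsto_of_le_of_le' tendsto_const_nhds tendsto_inv_atTop_zero
    ?_ ?_
  · filter_upwards [eventually_ge_atTop 0] with r hr
    positivity
  · filter_upwards [eventually_gt_atTop 0] with r hr
    have : r ^ 2 ≤ (1 + r ^ 2) ^ n :=
      (le_add_of_nonneg_left zero_le_one).trans (le_self_pow₀ (by nlinarith) hn)
    rw [div_le_iff₀ (by positivity), inv_mul_eq_div, le_div_iff₀ hr]
    nlinarith

lemma hasDerivAt_antideriv_sq_div_one_add_sq_pow_three (r : ℝ) :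
    HasDerivAt (fun r : ℝ => (arctan r + r / (1 + r ^ 2)) / 8 - r / (1 + r ^ 2) ^ 2 / 4)
      (r ^ 2 / (1 + r ^ 2) ^ 3) r := by
  have hr : 1 + r ^ 2 ≠ 0 := by positivity
  have hsq : HasDerivAt (fun r : ℝ => 1 + r ^ 2) (2 * r) r := by
    simpa using (hasDerivAt_pow 2 r).const_add 1
  have h :=
    (((hasDerivAt_arctan r).fun_add ((hasDerivAt_id' r).fun_div hsq hr)).div_const 8).fun_sub
      (((hasDerivAt_id' r).fun_div (hsq.fun_pow 2) (pow_ne_zero 2 hr)).div_const 4)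
  refine h.congr_deriv ?_
  field_simp
  ring

lemma integral_Ioi_sq_div_one_add_sq_pow_three :
    ∫ r in Ioi (0 : ℝ), r ^ 2 / (1 + r ^ 2) ^ 3 = π / 16 := by
  have hlim : Tendsto (fun r : ℝ => (arctan r + r / (1 + r ^ 2)) / 8 - r / (1 + r ^ 2) ^ 2 / 4)
      atTop (𝓝 ((π / 2 + 0) / 8 - 0 / 4)) := by
    have := tendsto_div_one_add_sq_pow_atTop (n := 1) one_ne_zero
    simp only [pow_one] at this
    exact (((tendsto_nhds_of_tendsto_nhdsWithin tendsto_arctan_atTop).add this).div_const 8).sub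
      ((tendsto_div_one_add_sq_pow_atTop two_ne_zero).div_const 4)
  rw [integral_Ioi_of_hasDerivAt_of_nonneg'
    (fun r _ => hasDerivAt_antideriv_sq_div_one_add_sq_pow_three r)
    (fun r _ => by positivity) hlim, arctan_zero]
  ring

lemma E3.integral_fun_norm (f : ℝ → ℝ) :
    ∫ x : E3, f ‖x‖ = 4 * π * ∫ r in Ioi (0 : ℝ), r ^ 2 * f r := by
  rw [integral_fun_norm_addHaar volume f, measureReal_def, EuclideanSpace.volume_ball_fin_three]
  simp only [finrank_euclideanSpace, Fintype.card_fin, ENNReal.ofReal_one, one_pow, one_mul,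
    ENNReal.toReal_ofReal (by positivity : 0 ≤ π * 4 / 3), Nat.add_one_sub_one, smul_eq_mul,
    nsmul_eq_mul, Nat.cast_ofNat]
  ring

lemma integral_inv_one_add_norm_sq_pow_three :
    ∫ x : E3, ((1 + ‖x‖ ^ 2) ^ 3)⁻¹ = π ^ 2 / 4 := by
  rw [E3.integral_fun_norm (fun r => ((1 + r ^ 2) ^ 3)⁻¹)]
  simp only [← div_eq_mul_inv, integral_Ioi_sq_div_one_add_sq_pow_three]
  ring

/-- For `|w| = 4/3`, `∫_{ℝ³} |u|³ dx = 16π²`. -/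
theorem integral_norm_uLY_cube (w : E3) (hw : ‖w‖ = 4 / 3) :
    ∫ x : E3, ‖uLY w x‖ ^ 3 = 16 * Real.pi ^ 2 := by
  have hu : ∀ x, ‖uLY w x‖ ^ 3 = 64 * ((1 + ‖x‖ ^ 2) ^ 3)⁻¹ := fun x => by
    rw [norm_uLY, hw, div_pow, div_eq_mul_inv]
    norm_num
  simp only [hu, integral_const_mul, integral_inv_one_add_norm_sq_pow_three]
  ring
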